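/- arXiv:2110.03992 — 8 statements merged into one kernel-verified Lean document; each statement's English description precedes it below -/
import Mathlib

section
/- Let $A_1,\dots,A_k$ and $B_1,\dots,B_k$ be $n\times n$ matrices over a commutative ring such that $B_iB_j = B_jB_i$ for all $i,j$ and $A_1B_1 + \cdots + A_kB_k = 0$. Define the polynomial $p(x_1,\dots,x_k) = \det(A_1x_1 + \cdots + A_kx_k)$ in commuting indeterminates. Then the matrix obtained by substituting $B_i$ for $x_i$ in $p$ (expanding $p$ as a sum of monomials and replacing each monomial $x_1^{e_1}\cdots x_k^{e_k}$ by $B_1^{e_1}\cdots B_k^{e_k}$) is the zero matrix. -/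
open MvPolynomial

/-- The polynomial `p(x₁,…,x_k) = det(A₁x₁ + ⋯ + A_k x_k)`. -/
noncomputable def phillipsPoly {R : Type*} [CommRing R] {n k : ℕ}
    (A : Fin k → Matrix (Fin n) (Fin n) R) : MvPolynomial (Fin k) R :=
  Matrix.det (∑ i, (MvPolynomial.X i : MvPolynomial (Fin k) R) • (A i).map MvPolynomial.C)

/-- Substitution of matrices `B i` for the variables `x i` in a multivariate polynomial:
each monomial `x₁^{e₁} ⋯ x_k^{e_k}` is replaced by the ordered product `B₁^{e₁} ⋯ B_k^{e_k}`. -/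
noncomputable def matSubst {R : Type*} [CommRing R] {n k : ℕ}
    (p : MvPolynomial (Fin k) R) (B : Fin k → Matrix (Fin n) (Fin n) R) :
    Matrix (Fin n) (Fin n) R :=
  ∑ m ∈ p.support, p.coeff m • ((List.finRange k).map fun i => B i ^ m i).prod

/-!
Write `N = ∑ xᵢ • Aᵢ` for the linear pencil, so `p = det N`, and let `φ` be evaluation at the
commuting family `B`, a ring homomorphism into the (noncommutative) matrix ring. The hypothesis
`∑ Aᵢ Bᵢ = 0` says that the row vector `(E_{r1}, …, E_{rn})` of matrix units is annihilated by
`φ(Nᵀ)` acting from the right. Multiplying on the right by `φ(adj Nᵀ)` shows that it is also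
annihilated by `φ(det N) = p(B)`, that is `E_{rr} p(B) = 0` for every `r`, hence `p(B) = 0`.
-/

open Matrix

theorem Matrix.mul_map_det_eq_zero_of_vecMul_map_eq_zero {ι S A : Type*} [Fintype ι]
    [DecidableEq ι] [CommRing S] [Ring A] (φ : S →+* A) {N : Matrix ι ι S} {v : ι → A}
    (h : v ᵥ* N.map φ = 0) (a : ι) : v a * φ N.det = 0 := by
  have hv : v ᵥ* (N * N.adjugate).map φ = 0 := by
    rw [Matrix.map_mul, ← vecMul_vecMul, h, zero_vecMul]
  rw [mul_adjugate, smul_one_eq_diagonal, diagonal_map (map_zero φ), vecMul_diagonal_const] at hv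
  simpa using congrFun hv a

namespace MvPolynomial

variable {R A σ : Type*} [CommRing R] [Ring A] [Algebra R A]

noncomputable def aevalOfCommute (B : σ → A) (hB : ∀ i j, Commute (B i) (B j)) :
    MvPolynomial σ R →ₐ[R] A :=
  haveI := Algebra.isMulCommutative_adjoin R (s := Set.range B)
    (by rintro _ ⟨i, rfl⟩ _ ⟨j, rfl⟩; exact hB i j)
  open scoped IsMulCommutative in
  (Algebra.adjoin R (Set.range B)).val.comp (aeval fun i => ⟨B i, Algebra.subset_adjoin ⟨i, rfl⟩⟩)

@[simp]
theorem aevalOfCommute_X (B : σ → A) (hB : ∀ i j, Commute (B i) (B j)) (i : σ) :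
    aevalOfCommute (R := R) B hB (X i) = B i := by
  simp [aevalOfCommute]

end MvPolynomial

theorem matSubst_eq_aevalOfCommute {R : Type*} [CommRing R] {n k : ℕ}
    (p : MvPolynomial (Fin k) R) (B : Fin k → Matrix (Fin n) (Fin n) R)
    (hB : ∀ i j, Commute (B i) (B j)) : matSubst p B = aevalOfCommute B hB p := by
  simp only [aevalOfCommute, AlgHom.comp_apply, aeval_def, eval₂_eq', map_sum,
    ← Algebra.smul_def, map_smul, Fin.prod_univ_def, map_list_prod, List.map_map]
  rfl

section LinearPencil

variable {R ι σ : Type*} [CommRing R] [Fintype ι] [DecidableEq ι] [Fintype σ]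

noncomputable def linearPencil (A : σ → Matrix ι ι R) : Matrix ι ι (MvPolynomial σ R) :=
  ∑ i, (X i : MvPolynomial σ R) • (A i).map C

theorem phillipsPoly_eq_det_linearPencil {n k : ℕ} (A : Fin k → Matrix (Fin n) (Fin n) R) :
    phillipsPoly A = (linearPencil A).det :=
  rfl

theorem aevalOfCommute_linearPencil_apply (A : σ → Matrix ι ι R) (B : σ → Matrix ι ι R)
    (hB : ∀ i j, Commute (B i) (B j)) (c b : ι) :
    aevalOfCommute B hB (linearPencil A c b) = ∑ i, A i c b • B i := by
  have hentry : linearPencil A c b = ∑ i, X i * C (A i c b) := by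
    simp [linearPencil, Matrix.sum_apply, Matrix.smul_apply, Matrix.map_apply, smul_eq_mul]
  simp only [hentry, mul_comm (X _), C_mul', map_sum, map_smul, aevalOfCommute_X]

theorem single_vecMul_map_linearPencil_transpose_eq_zero (A B : σ → Matrix ι ι R)
    (hB : ∀ i j, Commute (B i) (B j)) (hAB : ∑ i, A i * B i = 0) (r : ι) :
    (fun b => single r b (1 : R)) ᵥ* (linearPencil A)ᵀ.map (aevalOfCommute B hB) = 0 := by
  ext c x y
  simp only [vecMul, dotProduct, map_apply, transpose_apply, aevalOfCommute_linearPencil_apply,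
    Matrix.sum_apply, Pi.zero_apply, Matrix.zero_apply]
  obtain rfl | hx := eq_or_ne x r
  · simp only [single_mul_apply_same, one_mul, Matrix.sum_apply, Matrix.smul_apply, smul_eq_mul]
    rw [Finset.sum_comm]
    simpa [mul_apply, Finset.mul_sum, Matrix.sum_apply] using congr_fun (congr_fun hAB c) y
  · simp [single_mul_apply_of_ne (h := hx)]

end LinearPencil

/-- Phillips' multivariate Cayley–Hamilton theorem. -/
theorem phillips_theorem {R : Type*} [CommRing R] {n k : ℕ}
    (A B : Fin k → Matrix (Fin n) (Fin n) R)
    (hB : ∀ i j, B i * B j = B j * B i)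
    (hAB : ∑ i, A i * B i = 0) :
    matSubst (phillipsPoly A) B = 0 := by
  have hC : ∀ i j, Commute (B i) (B j) := hB
  ext r y
  have hrow := Matrix.mul_map_det_eq_zero_of_vecMul_map_eq_zero
    (aevalOfCommute B hC).toRingHom (single_vecMul_map_linearPencil_transpose_eq_zero A B hC hAB r) r
  rw [det_transpose, ← phillipsPoly_eq_det_linearPencil, AlgHom.toRingHom_eq_coe, RingHom.coe_coe,
    ← matSubst_eq_aevalOfCommute] at hrow
  simpa [single_mul_apply_same] using congr_fun (congr_fun hrow r) y
end

section
/- Let $A, B$ be commuting $n\times n$ matrices over a commutative ring. Define the bivariate polynomial $p_2(x,y) = \det(xA - yB)$. Then substituting $x = B$ and $y = A$ into $p_2$ yields the zero matrix, i.e. $p_2(B, A) = 0$. -/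
/-!
In the commutative subalgebra `T = R[A, B]` of matrices, `p₂(B, A)` is the determinant of the
matrix `N = (aᵢⱼ B - bᵢⱼ A)ᵢⱼ` with entries in `T`. Acting on `Rⁿ`, the rows of `Nᵀ` combine
the standard basis vectors into the columns of `BA - AB = 0`, so the adjugate identity
`adj(Nᵀ) Nᵀ = det N • 1` forces `det N • eⱼ = 0` for every `j`: the determinant trick behind
Cayley–Hamilton.
-/

open MvPolynomial

/-- The bivariate polynomial `p₂(x,y) = det(xA - yB)`, with `x = X 0` and `y = X 1`. -/
noncomputable def pTwo {R : Type*} [CommRing R] {n : ℕ}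
    (A B : Matrix (Fin n) (Fin n) R) : MvPolynomial (Fin 2) R :=
  Matrix.det
    ((MvPolynomial.X 0 : MvPolynomial (Fin 2) R) • A.map MvPolynomial.C
      - (MvPolynomial.X 1 : MvPolynomial (Fin 2) R) • B.map MvPolynomial.C)

open scoped IsMulCommutative Matrix

theorem Matrix.det_smul_eq_zero_of_sum_smul_eq_zero {ι T M : Type*} [Fintype ι] [DecidableEq ι]
    [CommRing T] [AddCommMonoid M] [Module T M] (N : Matrix ι ι T) {v : ι → M}
    (hv : ∀ i, ∑ j, N i j • v j = 0) (j : ι) : N.det • v j = 0 :=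
  calc N.det • v j = ∑ k, (N.adjugate * N) j k • v k := by
        simp [adjugate_mul, one_apply, ite_smul]
    _ = ∑ i, N.adjugate j i • ∑ k, N i k • v k := by
        simp only [mul_apply, Finset.sum_smul, Finset.smul_sum, smul_smul]
        exact Finset.sum_comm
    _ = 0 := by simp [hv]

section

variable {R : Type*} [CommRing R]

theorem Subalgebra.coe_aeval_fin_two {S : Type*} [Ring S] [Algebra R S] (T : Subalgebra R S)
    [IsMulCommutative T] (x y : T) (p : MvPolynomial (Fin 2) R) :
    ((aeval ![x, y] p : T) : S) =
      ∑ m ∈ p.support, p.coeff m • ((x : S) ^ m 0 * (y : S) ^ m 1) := by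
  rw [aeval_def, eval₂_eq', ← T.val_apply, map_sum]
  refine Finset.sum_congr rfl fun m _ => ?_
  simp [Fin.prod_univ_two, Algebra.smul_def]

theorem aeval_pTwo {n : ℕ} {T : Type*} [CommRing T] [Algebra R T]
    (A B : Matrix (Fin n) (Fin n) R) (x y : T) :
    aeval ![x, y] (pTwo A B) =
      (x • A.map (algebraMap R T) - y • B.map (algebraMap R T)).det := by
  rw [pTwo, AlgHom.map_det]
  congr 1
  ext i j
  simp [Matrix.smul_apply]

theorem det_smul_map_sub_smul_map_eq_zero {n : Type*} [Fintype n] [DecidableEq n]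
    (T : Subalgebra R (Matrix n n R)) [IsMulCommutative T] (a b : T) :
    (b • (a : Matrix n n R).map (algebraMap R T)
      - a • (b : Matrix n n R).map (algebraMap R T)).det = 0 := by
  set N := b • (a : Matrix n n R).map (algebraMap R T)
    - a • (b : Matrix n n R).map (algebraMap R T)
  have hcol (c : Matrix n n R) (i : n) :
      ∑ j, c j i • (Pi.single j 1 : n → R) = c *ᵥ Pi.single i 1 := by
    ext k
    simp [Finset.sum_apply, Pi.single_apply]
  have hsum (i : n) : ∑ j, Nᵀ i j • (Pi.single j 1 : n → R) = 0 := by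
    simp only [N, Matrix.transpose_apply, Matrix.sub_apply, Matrix.smul_apply, Matrix.map_apply,
      sub_smul, smul_eq_mul, mul_smul, algebraMap_smul, Finset.sum_sub_distrib, ← Finset.smul_sum,
      hcol]
    rw [Subalgebra.smul_def, Subalgebra.smul_def, Matrix.smul_eq_mulVec, Matrix.smul_eq_mulVec,
      Matrix.mulVec_mulVec, Matrix.mulVec_mulVec, ← Subalgebra.coe_mul, ← Subalgebra.coe_mul,
      mul_comm b a, sub_self]
  have hdet (j : n) : ((N.det : T) : Matrix n n R) *ᵥ Pi.single j 1 = 0 := by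
    rw [← Matrix.det_transpose]
    exact Nᵀ.det_smul_eq_zero_of_sum_smul_eq_zero hsum j
  exact Subtype.ext <| Matrix.ext_of_mulVec_single fun j => by
    rw [hdet, ZeroMemClass.coe_zero, Matrix.zero_mulVec]

end

/-- Corollary 1.2: for commuting matrices `A, B`, the bivariate polynomial
`p₂(x,y) = det(xA - yB)` satisfies `p₂(B,A) = 0`, where substitution replaces each
monomial `x^i y^j` by `B^i A^j` (well-defined since `A` and `B` commute). -/
theorem phillips_two_matrices {R : Type*} [CommRing R] {n : ℕ}
    (A B : Matrix (Fin n) (Fin n) R) (h : A * B = B * A) :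
    (∑ m ∈ (pTwo A B).support, (pTwo A B).coeff m • (B ^ m 0 * A ^ m 1)) = 0 := by
  let T := Algebra.adjoin R ({A, B} : Set (Matrix (Fin n) (Fin n) R))
  have : IsMulCommutative T :=
    Algebra.isMulCommutative_adjoin R (by rintro x (rfl | rfl) y (rfl | rfl) <;> simp [h])
  let a : T := ⟨A, Algebra.subset_adjoin (by simp)⟩
  let b : T := ⟨B, Algebra.subset_adjoin (by simp)⟩
  calc _ = ((aeval ![b, a] (pTwo A B) : T) : Matrix (Fin n) (Fin n) R) :=
        (T.coe_aeval_fin_two b a _).symm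
    _ = 0 := by rw [aeval_pTwo, det_smul_map_sub_smul_map_eq_zero T a b, ZeroMemClass.coe_zero]
end

section
/- Let $(A_{i,j})_{i\in[n],j\in[k]}$ and $(B_{i,j})_{i\in[n],j\in[k]}$ be families of $n\times n$ matrices over a commutative ring containing $1/n!$, such that all the $B_{i,j}$ commute pairwise and $A_{i,1}B_{i,1} + \cdots + A_{i,k}B_{i,k} = 0$ for each $i \in [n]$. Define $\hat p((x_{i,j})) = \mathfrak{D}(A_{1,1}x_{1,1}+\cdots+A_{1,k}x_{1,k}, \dots, A_{n,1}x_{n,1}+\cdots+A_{n,k}x_{n,k})$. Then substituting $B_{i,j}$ for $x_{i,j}$ yields $\hat p((B_{i,j})) = 0$. -/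
/-!
Work in the commutative subalgebra `S` generated by the `B i j`, so that substitution is
`MvPolynomial.aeval`. Polarizing the mixed discriminant, `p̂(b) = (1/n!) ∑_β det D_β`, where the
`i`-th row of `D_β` is the `i`-th row of `C_{β i} = ∑_j b_{β i, j} A_{β i, j}`. After mapping
`S` into matrices, the matrix units `(E_{c,m})_m` form a left kernel vector of `D_βᵀ`, since
`∑_m E_{c,m} (C_{β i})_{i,m} = E_{c,i} ∑_j A_{β i, j} B_{β i, j} = 0`. The adjugate identity then
gives `E_{c,c} det D_β = 0` for every `c`, and summing over `c` gives `det D_β = 0`.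
-/

open MvPolynomial

/-- The polynomial
`p̂((x_{i,j})) = 𝔇(A_{1,1}x_{1,1}+⋯+A_{1,k}x_{1,k}, …, A_{n,1}x_{n,1}+⋯+A_{n,k}x_{n,k})`,
where the mixed discriminant is
`𝔇(C₁,…,Cₙ) = (1/n!) ∑_{α ∈ Sₙ} ∑_{σ ∈ Sₙ} sgn(σ) ∏ᵢ (C_{α(σ i)})_{i, σ i}`. -/
noncomputable def mixedPhillipsPoly {R : Type*} [CommRing R] {n k : ℕ}
    [Invertible (n.factorial : R)]
    (A : Fin n → Fin k → Matrix (Fin n) (Fin n) R) :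
    MvPolynomial (Fin n × Fin k) R :=
  MvPolynomial.C (⅟(n.factorial : R)) *
    ∑ α : Equiv.Perm (Fin n), ∑ σ : Equiv.Perm (Fin n),
      ((Equiv.Perm.sign σ : ℤ) : MvPolynomial (Fin n × Fin k) R) *
        ∏ i : Fin n,
          ((∑ j : Fin k,
              (MvPolynomial.X (α (σ i), j) : MvPolynomial (Fin n × Fin k) R) •
                (A (α (σ i)) j).map MvPolynomial.C :
              Matrix (Fin n) (Fin n) (MvPolynomial (Fin n × Fin k) R)) i (σ i))

/-- Substitution of the pairwise commuting matrices `B i j` for the variables `x_{i,j}`: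
each monomial is replaced by the corresponding ordered product of powers of the `B i j`. -/
noncomputable def mixedSubst {R : Type*} [CommRing R] {n k : ℕ}
    (p : MvPolynomial (Fin n × Fin k) R) (B : Fin n → Fin k → Matrix (Fin n) (Fin n) R) :
    Matrix (Fin n) (Fin n) R :=
  ∑ m ∈ p.support, p.coeff m •
    (((List.finRange n).flatMap
        (fun i => (List.finRange k).map fun j => ((i, j) : Fin n × Fin k))).map
      fun v => B v.1 v.2 ^ m v).prod

open Matrix

lemma prod_map_finRange_flatMap_pairs {M : Type*} [CommMonoid M] {n k : ℕ}
    (g : Fin n × Fin k → M) :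
    (((List.finRange n).flatMap
        (fun i => (List.finRange k).map fun j => ((i, j) : Fin n × Fin k))).map g).prod
      = ∏ v, g v := by
  rw [List.map_flatMap, List.flatMap, List.prod_flatten, List.map_map,
    Fintype.prod_prod_type, Fin.prod_univ_def]
  congr 1
  refine List.map_congr_left fun i _ => ?_
  simp only [Function.comp, List.map_map, Fin.prod_univ_def]
  rfl

lemma mixedSubst_eq_aeval {R S : Type*} [CommRing R] [CommRing S] [Algebra R S] {n k : ℕ}
    (f : S →ₐ[R] Matrix (Fin n) (Fin n) R) (b : Fin n × Fin k → S)
    (p : MvPolynomial (Fin n × Fin k) R) :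
    mixedSubst p (fun i j => f (b (i, j))) = f (aeval b p) := by
  rw [aeval_def, eval₂_eq', map_sum, mixedSubst]
  refine Finset.sum_congr rfl fun m _ => ?_
  simp only [← Algebra.smul_def, map_smul, ← map_pow]
  rw [show (fun v : Fin n × Fin k => f (b (v.1, v.2) ^ m v)) = f ∘ fun v => b v ^ m v from rfl,
    List.prod_map_hom, prod_map_finRange_flatMap_pairs]

def mixedRows {ι S : Type*} (N : ι → Matrix ι ι S) (β : ι → ι) : Matrix ι ι S :=
  Matrix.of fun i => N (β i) i

lemma sum_sum_sign_mul_prod_eq_sum_det_mixedRows {ι S : Type*} [Fintype ι] [DecidableEq ι]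
    [CommRing S] (N : ι → Matrix ι ι S) :
    ∑ α : Equiv.Perm ι, ∑ σ : Equiv.Perm ι,
        ((Equiv.Perm.sign σ : ℤ) : S) * ∏ i, N (α (σ i)) i (σ i)
      = ∑ β : Equiv.Perm ι, (mixedRows N β).det := by
  have reindex (σ : Equiv.Perm ι) :
      ∑ α : Equiv.Perm ι, ((Equiv.Perm.sign σ : ℤ) : S) * ∏ i, N (α (σ i)) i (σ i)
        = ∑ β : Equiv.Perm ι, ((Equiv.Perm.sign σ : ℤ) : S) * ∏ i, N (β i) i (σ i) :=
    Fintype.sum_equiv (Equiv.mulRight σ) _ _ fun _ => rfl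
  rw [Finset.sum_comm]
  simp_rw [reindex]
  rw [Finset.sum_comm]
  refine Finset.sum_congr rfl fun β _ => ?_
  rw [← det_transpose, det_apply']
  rfl

lemma aeval_mixedPhillipsPoly {R S : Type*} [CommRing R] [CommRing S] [Algebra R S] {n k : ℕ}
    [Invertible (n.factorial : R)] (A : Fin n → Fin k → Matrix (Fin n) (Fin n) R)
    (b : Fin n × Fin k → S) :
    aeval b (mixedPhillipsPoly A) = algebraMap R S ⅟(n.factorial : R) *
      ∑ β : Equiv.Perm (Fin n),
        (mixedRows (fun l => ∑ j, b (l, j) • (A l j).map (algebraMap R S)) β).det := by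
  rw [← sum_sum_sign_mul_prod_eq_sum_det_mixedRows, mixedPhillipsPoly]
  simp only [map_mul, map_sum, map_prod, map_intCast, aeval_C, aeval_X, Matrix.sum_apply,
    Matrix.smul_apply, Matrix.map_apply, smul_eq_mul]

lemma mul_map_det_eq_zero_of_vecMul_eq_zero {ι S T : Type*} [Fintype ι] [DecidableEq ι]
    [CommRing S] [Ring T] (f : S →+* T) {D : Matrix ι ι S} {v : ι → T}
    (hv : v ᵥ* D.map f = 0) (c : ι) : v c * f D.det = 0 := by
  have : v ᵥ* (D * D.adjugate).map f = 0 := by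
    rw [Matrix.map_mul, ← vecMul_vecMul, hv, zero_vecMul]
  rw [mul_adjugate, smul_one_eq_diagonal, diagonal_map (map_zero f)] at this
  simpa [vecMul_diagonal] using congrFun this c

lemma single_one_mul_eq_sum_smul_single {ι α : Type*} [Fintype ι] [DecidableEq ι] [Semiring α]
    (c i : ι) (X : Matrix ι ι α) :
    single c i (1 : α) * X = ∑ m, X i m • single c m (1 : α) := by
  ext t u
  by_cases ht : c = t
  · subst ht
    simp [single_mul_apply_same, Matrix.sum_apply, single_apply]
  · simp [single_mul_apply_of_ne (h := Ne.symm ht), Matrix.sum_apply, ht]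

lemma algHom_det_mixedRows_eq_zero {R S : Type*} [CommRing R] [CommRing S] [Algebra R S]
    {n k : ℕ} (A : Fin n → Fin k → Matrix (Fin n) (Fin n) R)
    (f : S →ₐ[R] Matrix (Fin n) (Fin n) R) (b : Fin n × Fin k → S)
    (hAB : ∀ i, ∑ j, A i j * f (b (i, j)) = 0) (β : Fin n → Fin n) :
    f (mixedRows (fun l => ∑ j, b (l, j) • (A l j).map (algebraMap R S)) β).det = 0 := by
  set D := mixedRows (fun l => ∑ j, b (l, j) • (A l j).map (algebraMap R S)) β
  have hD (i m : Fin n) : f (D i m) = ∑ j, A (β i) j i m • f (b (β i, j)) := by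
    simp only [D, mixedRows, of_apply, Matrix.sum_apply, Matrix.smul_apply, map_apply,
      smul_eq_mul, map_sum, mul_comm (b _), ← Algebra.smul_def, map_smul]
  have hker (c : Fin n) : single c c (1 : R) * f D.det = 0 := by
    rw [← det_transpose]
    refine mul_map_det_eq_zero_of_vecMul_eq_zero f.toRingHom (v := fun m => single c m 1) ?_ c
    funext i
    simp only [vecMul, dotProduct, map_apply, transpose_apply, AlgHom.toRingHom_eq_coe,
      RingHom.coe_coe, hD, Pi.zero_apply]
    calc ∑ m, single c m (1 : R) * ∑ j, A (β i) j i m • f (b (β i, j))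
        = ∑ j, (∑ m, A (β i) j i m • single c m (1 : R)) * f (b (β i, j)) := by
          simp only [Finset.mul_sum, Finset.sum_mul, smul_mul_assoc, mul_smul_comm]
          exact Finset.sum_comm
      _ = single c i 1 * ∑ j, A (β i) j * f (b (β i, j)) := by
          simp only [← single_one_mul_eq_sum_smul_single, Finset.mul_sum, mul_assoc]
      _ = 0 := by rw [hAB, mul_zero]
  rw [← one_mul (f D.det), ← sum_single_one, Finset.sum_mul]
  exact Finset.sum_eq_zero fun c _ => hker c

theorem mixedSubst_mixedPhillipsPoly_algHom_eq_zero {R S : Type*} [CommRing R] [CommRing S]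
    [Algebra R S] {n k : ℕ} [Invertible (n.factorial : R)]
    (A : Fin n → Fin k → Matrix (Fin n) (Fin n) R)
    (f : S →ₐ[R] Matrix (Fin n) (Fin n) R) (b : Fin n × Fin k → S)
    (hAB : ∀ i, ∑ j, A i j * f (b (i, j)) = 0) :
    mixedSubst (mixedPhillipsPoly A) (fun i j => f (b (i, j))) = 0 := by
  rw [mixedSubst_eq_aeval, aeval_mixedPhillipsPoly, map_mul, map_sum]
  simp only [algHom_det_mixedRows_eq_zero A f b hAB, Finset.sum_const_zero, mul_zero]

/-- The Phillips-type generalization of the Bapat–Roy theorem (Theorem 1.4). -/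
theorem mixed_disc_phillips {R : Type*} [CommRing R] {n k : ℕ}
    [Invertible (n.factorial : R)]
    (A B : Fin n → Fin k → Matrix (Fin n) (Fin n) R)
    (hB : ∀ i j i' j', B i j * B i' j' = B i' j' * B i j)
    (hAB : ∀ i, ∑ j, A i j * B i j = 0) :
    mixedSubst (mixedPhillipsPoly A) B = 0 := by
  let S := Algebra.adjoin R (Set.range fun v : Fin n × Fin k => B v.1 v.2)
  have : IsMulCommutative S := Algebra.isMulCommutative_adjoin R <| by
    rintro _ ⟨v, rfl⟩ _ ⟨w, rfl⟩
    exact hB _ _ _ _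
  open scoped IsMulCommutative in
  exact mixedSubst_mixedPhillipsPoly_algHom_eq_zero A S.val
    (fun v => ⟨B v.1 v.2, Algebra.subset_adjoin ⟨v, rfl⟩⟩) hAB
end

section
/- Let $A_1,\dots,A_k$ and $B_1,\dots,B_k$ be $n\times n$ matrices over a commutative ring such that all the $B_i$ commute pairwise. Define $p(x_1,\dots,x_k)=\det(A_1x_1+\cdots+A_kx_k)$. Then for all $b,e\in[n]$, the $(b,e)$ entry of $p(B_1,\dots,B_k)$ equals the signed weight sum over pathmutations: $p(B_1,\dots,B_k)_{b,e} = \sum_{\pi\in S_n}\mathrm{sgn}(\pi)\sum_{(\ell_1,\dots,\ell_n)\in[k]^n}\left(\prod_{i=1}^n (A_{\ell_i})_{i,\pi_i}\right)\left(B_{\ell_1}B_{\ell_2}\cdots B_{\ell_n}\right)_{b,e}$. -/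
open MvPolynomial

/-! Because the `B i` commute, they generate a commutative subalgebra `S` of the matrix ring, and
`matSubst p B` is just `aeval` into `S` followed by the inclusion. Evaluation is a ring
homomorphism, so it commutes with `det`: `p(B)` is the determinant, over `S`, of the matrix with
entries `∑ l, A l i j • B l`. The Leibniz formula and distributing the product of these sums over
`ℓ : Fin n → Fin k` give the expansion. -/

open scoped IsMulCommutative

lemma map_prod_univ_eq_prod_finRange {S M F : Type*} [CommMonoid S] [Monoid M] [FunLike F S M]
    [MonoidHomClass F S M] (φ : F) {n : ℕ} (f : Fin n → S) :
    φ (∏ i, f i) = ((List.finRange n).map fun i => φ (f i)).prod := by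
  rw [Fin.prod_univ_def, map_list_prod, List.map_map]
  rfl

lemma matSubst_comp_eq_map_aeval {R S : Type*} [CommRing R] [CommRing S] [Algebra R S] {n k : ℕ}
    (φ : S →ₐ[R] Matrix (Fin n) (Fin n) R) (g : Fin k → S) (p : MvPolynomial (Fin k) R) :
    matSubst p (fun i => φ (g i)) = φ (aeval g p) := by
  rw [aeval_def, eval₂_eq', map_sum, matSubst]
  refine Finset.sum_congr rfl fun m _ => ?_
  rw [map_mul, AlgHom.commutes, ← Algebra.smul_def, map_prod_univ_eq_prod_finRange]
  simp only [map_pow]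

lemma aeval_phillipsPoly {R S : Type*} [CommRing R] [CommRing S] [Algebra R S] {n k : ℕ}
    (A : Fin k → Matrix (Fin n) (Fin n) R) (g : Fin k → S) :
    aeval g (phillipsPoly A) = ∑ π : Equiv.Perm (Fin n), (Equiv.Perm.sign π : ℤ) •
      ∑ ℓ : Fin n → Fin k, (∏ i, A (ℓ i) i (π i)) • ∏ i, g (ℓ i) := by
  have hentry : ∀ i j, (∑ l, (X l : MvPolynomial (Fin k) R) • (A l).map C).map (aeval g) i j =
      ∑ l, A l i j • g l := by
    intro i j
    simp only [Matrix.map_apply, Matrix.sum_apply, Matrix.smul_apply, map_sum, smul_eq_mul]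
    simp only [map_mul, aeval_X, aeval_C, Algebra.smul_def, mul_comm]
  rw [phillipsPoly, AlgHom.map_det, AlgHom.mapMatrix_apply, ← Matrix.det_transpose,
    Matrix.det_apply']
  refine Finset.sum_congr rfl fun π _ => ?_
  simp only [Matrix.transpose_apply, hentry, Fintype.prod_sum, Finset.prod_smul, zsmul_eq_mul]

/-- The `(b,e)` entry of `p(B₁,…,B_k)` is the signed weight sum over pathmutations. -/
theorem phillips_pathmutation_expansion {R : Type*} [CommRing R] {n k : ℕ}
    (A B : Fin k → Matrix (Fin n) (Fin n) R)
    (hB : ∀ i j, B i * B j = B j * B i) (b e : Fin n) :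
    matSubst (phillipsPoly A) B b e =
      ∑ π : Equiv.Perm (Fin n), ((Equiv.Perm.sign π : ℤ) : R) *
        ∑ ℓ : Fin n → Fin k,
          (∏ i : Fin n, (A (ℓ i)) i (π i)) *
            (((List.finRange n).map fun i => B (ℓ i)).prod b e) := by
  have := Algebra.isMulCommutative_adjoin R (s := Set.range B)
    (by rintro _ ⟨i, rfl⟩ _ ⟨j, rfl⟩; exact hB i j)
  let g : Fin k → Algebra.adjoin R (Set.range B) := fun i => ⟨B i, Algebra.subset_adjoin ⟨i, rfl⟩⟩
  rw [show B = fun i => (Algebra.adjoin R (Set.range B)).val (g i) from rfl,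
    matSubst_comp_eq_map_aeval, aeval_phillipsPoly]
  simp only [map_sum, map_zsmul, map_smul, map_prod_univ_eq_prod_finRange]
  simp only [Matrix.sum_apply, Matrix.smul_apply]
  simp only [zsmul_eq_mul, smul_eq_mul]
end

section
/- Let $A_1,\dots,A_k$ and $B_1,\dots,B_k$ be $n\times n$ matrices over a commutative ring, with the $B_i$ pairwise commuting and $A_1B_1+\cdots+A_kB_k=0$. Then for all $b,e\in[n]$: $\sum_{j=1}^n \sum_{\pi\in S_n} \mathrm{sgn}(\pi) \sum_{(\ell_1,\dots,\ell_n)\in[k]^n} (A_{\ell_s})_{s,j}\left(\prod_{r\neq s}(A_{\ell_r})_{r,\pi_r}\right)\left(B_{\ell_1}\cdots B_{\ell_n}\right)_{j,e} = 0$, where $s = \pi^{-1}(b)$ depends on $\pi$. (This is the statement that the total signed weight of the set $\mathcal{G}(b,e)$ of pathmaps is zero.) -/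
/-!
Fix `π` and put `s = π⁻¹ b`. Summing over `j` turns `A_{ℓ_s}` and the product of the `B`'s into
the entry `(A_{ℓ_s} B_{ℓ_1} ⋯ B_{ℓ_n})_{s,e}`; as the `B`'s commute, `B_{ℓ_s}` can be moved next
to `A_{ℓ_s}`. Everything else in the summand depends only on the labels `ℓ_r` with `r ≠ s`, so
summing over the label `ℓ_s` alone produces the factor `∑ᵢ Aᵢ Bᵢ = 0`.
-/

open Finset

theorem List.prod_map_eq_mul_prod_map_erase {ι M : Type*} [Monoid M] [DecidableEq ι]
    {f : ι → M} {l : List ι} (hf : ∀ i ∈ l, ∀ j ∈ l, Commute (f i) (f j)) {a : ι} (ha : a ∈ l) :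
    (l.map f).prod = f a * ((l.erase a).map f).prod := by
  rw [((List.perm_cons_erase ha).map f).prod_eq'
    (List.pairwise_map.2 (List.pairwise_of_forall_mem_list hf)), List.map_cons, List.prod_cons]

theorem Fintype.sum_eq_zero_of_sum_update_eq_zero {ι κ M : Type*} [DecidableEq ι] [Fintype ι]
    [Fintype κ] [AddCommMonoid M] (F : (ι → κ) → M) (s : ι)
    (hF : ∀ ℓ, ∑ i, F (Function.update ℓ s i) = 0) : ∑ ℓ, F ℓ = 0 := by
  rw [← (Equiv.funSplitAt s κ).symm.sum_comp, Fintype.sum_prod_type_right]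
  refine Finset.sum_eq_zero fun g _ => ?_
  rcases isEmpty_or_nonempty κ with _ | ⟨⟨i₀⟩⟩
  · simp
  have hsplit : ∀ i, (Equiv.funSplitAt s κ).symm (i, g)
      = Function.update ((Equiv.funSplitAt s κ).symm (i₀, g)) s i := by
    intro i
    funext r
    by_cases hr : r = s
    · subst hr; simp [Equiv.funSplitAt_symm_apply]
    · simp only [Equiv.funSplitAt_symm_apply, hr, Function.update_of_ne hr, dite_false]
  exact (Finset.sum_congr rfl fun i _ => congrArg F (hsplit i)).trans (hF _)

theorem sum_entry_mul_prod_mul_listProd_eq_zero {R : Type*} [CommSemiring R] {n k : ℕ}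
    (A B : Fin k → Matrix (Fin n) (Fin n) R) (hB : ∀ i j, Commute (B i) (B j))
    (hAB : ∑ i, A i * B i = 0) (c : Fin n → Fin n) (s e : Fin n) :
    ∑ j : Fin n, ∑ ℓ : Fin n → Fin k,
      A (ℓ s) s j * (∏ r ∈ univ.erase s, A (ℓ r) r (c r)) *
        ((List.finRange n).map fun i => B (ℓ i)).prod j e = 0 := by
  set P : (Fin n → Fin k) → R := fun ℓ => ∏ r ∈ univ.erase s, A (ℓ r) r (c r)
  set M : (Fin n → Fin k) → Matrix (Fin n) (Fin n) R :=
    fun ℓ => (((List.finRange n).erase s).map fun i => B (ℓ i)).prod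
  have hprod : ∀ ℓ : Fin n → Fin k,
      ((List.finRange n).map fun i => B (ℓ i)).prod = B (ℓ s) * M ℓ := fun ℓ =>
    List.prod_map_eq_mul_prod_map_erase (fun _ _ _ _ => hB _ _) (List.mem_finRange s)
  have hP : ∀ ℓ i, P (Function.update ℓ s i) = P ℓ := fun ℓ i =>
    prod_congr rfl fun r hr => by rw [Function.update_of_ne (ne_of_mem_erase hr)]
  have hM : ∀ ℓ i, M (Function.update ℓ s i) = M ℓ := fun ℓ i =>
    congrArg List.prod <| List.map_congr_left fun r hr => by
      rw [Function.update_of_ne ((List.nodup_finRange n).mem_erase_iff.mp hr).1]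
  calc _ = ∑ ℓ : Fin n → Fin k, P ℓ * (A (ℓ s) * B (ℓ s) * M ℓ) s e := by
        rw [sum_comm]
        refine sum_congr rfl fun ℓ _ => ?_
        rw [hprod, Matrix.mul_assoc, Matrix.mul_apply, mul_sum]
        exact sum_congr rfl fun j _ => by ring
    _ = 0 := Fintype.sum_eq_zero_of_sum_update_eq_zero _ s fun ℓ => by
        simp only [hP, hM, Function.update_self, ← mul_sum, ← Matrix.sum_apply, ← sum_mul, hAB,
          Matrix.zero_mul, Matrix.zero_apply, mul_zero]

/-- Lemma 2.6: the total signed weight of the set `𝒢(b,e)` of pathmaps is zero.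
Here, for each permutation `π`, `s = π⁻¹ b` is the position with `π s = b`. -/
theorem total_signed_weight_G {R : Type*} [CommRing R] {n k : ℕ}
    (A B : Fin k → Matrix (Fin n) (Fin n) R)
    (hB : ∀ i j, B i * B j = B j * B i)
    (hAB : ∑ i, A i * B i = 0) (b e : Fin n) :
    ∑ j : Fin n, ∑ π : Equiv.Perm (Fin n), ((Equiv.Perm.sign π : ℤ) : R) *
      ∑ ℓ : Fin n → Fin k,
        (A (ℓ (π⁻¹ b))) (π⁻¹ b) j *
          (∏ r ∈ Finset.univ.erase (π⁻¹ b), (A (ℓ r)) r (π r)) *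
          (((List.finRange n).map fun i => B (ℓ i)).prod j e) = 0 := by
  rw [sum_comm]
  refine sum_eq_zero fun π _ => ?_
  rw [← mul_sum, sum_entry_mul_prod_mul_listProd_eq_zero A B hB hAB π (π⁻¹ b) e, mul_zero]
end

section
/- Let $A_1,\dots,A_k$ and $B_1,\dots,B_k$ be $n\times n$ matrices over a commutative ring, with the $B_i$ pairwise commuting and $A_1B_1+\cdots+A_kB_k=0$. Then for all $b,e\in[n]$: $\sum_{j\neq b} \sum_{\pi\in S_n} \mathrm{sgn}(\pi) \sum_{(\ell_1,\dots,\ell_n)\in[k]^n} (A_{\ell_s})_{s,j}\left(\prod_{r\neq s}(A_{\ell_r})_{r,\pi_r}\right)\left(B_{\ell_1}\cdots B_{\ell_n}\right)_{j,e} = 0$, where $s = \pi^{-1}(b)$. (This is the statement that the total signed weight of the set $\mathcal{H}(b,e)$ of pathmaps with repeated target is zero, proved via a sign-reversing weight-preserving involution swapping the two repeated targets.) -/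
/-!
For fixed `j` and `ℓ`, the factor `(B_{ℓ_1} ⋯ B_{ℓ_n})_{j,e}` does not depend on `π`, and the
remaining signed sum over `π` is the Leibniz expansion of the determinant of the matrix with
rows `(A_{ℓ_r})_{r,·}` whose column `b` has been overwritten by its column `j`. For `j ≠ b` this
matrix has two equal columns, so its determinant vanishes; transposing the two columns is the
sign-reversing involution swapping the repeated targets.
-/

open Finset Equiv

namespace Matrix

variable {ι R : Type*} [Fintype ι] [DecidableEq ι] [CommRing R]

theorem prod_updateCol_apply_perm (M : Matrix ι ι R) (b j : ι) (π : Perm ι) :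
    ∏ r, M.updateCol b (fun i => M i j) r (π r) =
      M (π⁻¹ b) j * ∏ r ∈ univ.erase (π⁻¹ b), M r (π r) := by
  rw [← mul_prod_erase _ _ (mem_univ (π⁻¹ b)), Perm.eq_inv_iff_eq.mp rfl, updateCol_self]
  congr 1
  refine prod_congr rfl fun r hr => updateCol_ne ?_
  exact fun h => ne_of_mem_erase hr (Perm.eq_inv_iff_eq.mpr h)

theorem det_updateCol_col_eq_sum (M : Matrix ι ι R) (b j : ι) :
    (M.updateCol b (fun i => M i j)).det =
      ∑ π : Perm ι, ((Perm.sign π : ℤ) : R) * M (π⁻¹ b) j *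
        ∏ r ∈ univ.erase (π⁻¹ b), M r (π r) := by
  rw [← det_transpose, det_apply']
  simp only [transpose_apply, prod_updateCol_apply_perm, mul_assoc]

end Matrix

theorem total_signed_weight_H_general {R : Type*} [CommRing R] {n k : ℕ}
    (A B : Fin k → Matrix (Fin n) (Fin n) R)
    (b e : Fin n) :
    ∑ j ∈ Finset.univ.erase b, ∑ π : Equiv.Perm (Fin n), ((Equiv.Perm.sign π : ℤ) : R) *
      ∑ ℓ : Fin n → Fin k,
        (A (ℓ (π⁻¹ b))) (π⁻¹ b) j *
          (∏ r ∈ Finset.univ.erase (π⁻¹ b), (A (ℓ r)) r (π r)) *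
          (((List.finRange n).map fun i => B (ℓ i)).prod j e) = 0 := by
  refine sum_eq_zero fun j hj => ?_
  simp_rw [mul_sum, sum_comm (γ := Perm (Fin n))]
  refine sum_eq_zero fun ℓ _ => ?_
  simp_rw [← mul_assoc, ← sum_mul]
  have hdet := Matrix.det_updateCol_eq_zero (M := Matrix.of fun r c => A (ℓ r) r c)
    (ne_of_mem_erase hj)
  rw [Matrix.det_updateCol_col_eq_sum] at hdet
  exact mul_eq_zero_of_left hdet _

/-- Lemma 2.7: the total signed weight of the set `ℋ(b,e)` of pathmaps with repeated target is zero.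
Here, for each permutation `π`, `s = π⁻¹ b` is the position with `π s = b`. -/
theorem total_signed_weight_H {R : Type*} [CommRing R] {n k : ℕ}
    (A B : Fin k → Matrix (Fin n) (Fin n) R)
    (hB : ∀ i j, B i * B j = B j * B i)
    (hAB : ∑ i, A i * B i = 0) (b e : Fin n) :
    ∑ j ∈ Finset.univ.erase b, ∑ π : Equiv.Perm (Fin n), ((Equiv.Perm.sign π : ℤ) : R) *
      ∑ ℓ : Fin n → Fin k,
        (A (ℓ (π⁻¹ b))) (π⁻¹ b) j *
          (∏ r ∈ Finset.univ.erase (π⁻¹ b), (A (ℓ r)) r (π r)) *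
          (((List.finRange n).map fun i => B (ℓ i)).prod j e) = 0 :=
  total_signed_weight_H_general A B b e
end

section
/- Let $M(x_1,\dots,x_k) = A_1x_1+\cdots+A_kx_k$ where $A_1,\dots,A_k$ are $n\times n$ matrices over a commutative ring $R$, and let $B_1,\dots,B_k$ be pairwise commuting $n\times n$ matrices over $R$ with $A_1B_1+\cdots+A_kB_k = 0$. Let $M^B_{i,j} = (A_1)_{i,j}B_1 + \cdots + (A_k)_{i,j}B_k$, and let $\det_B M[s|b] = (-1)^{s+b}\sum_{\sigma\in S_n,\,\sigma_s=b}\mathrm{sgn}(\sigma)\prod_{r\neq s} M^B_{r,\sigma_r}$ (product taken in increasing order of $r$; well-defined since the $M^B_{r,j}$ all commute). Then for all $b\in[n]$: $\sum_{s=1}^n (-1)^{s+b}\, M^B_{s,b}\, \det\nolimits_B M[s|b] = 0$. -/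
/-- The matrix `M^B_{i,j} = (A₁)_{i,j} B₁ + ⋯ + (A_k)_{i,j} B_k`. -/
noncomputable def MB {R : Type*} [CommRing R] {n k : ℕ}
    (A B : Fin k → Matrix (Fin n) (Fin n) R) (i j : Fin n) :
    Matrix (Fin n) (Fin n) R :=
  ∑ t : Fin k, (A t) i j • B t

/-- `det_B M[s|b] = (-1)^{s+b} ∑_{σ ∈ Sₙ, σ s = b} sgn(σ) ∏_{r ≠ s} M^B_{r,σ r}`,
the determinant of `M` with row `s` and column `b` deleted, with the `Bᵢ` substituted
for the `xᵢ`; the product is taken in increasing order of `r`. -/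
noncomputable def detB {R : Type*} [CommRing R] {n k : ℕ}
    (A B : Fin k → Matrix (Fin n) (Fin n) R) (s b : Fin n) :
    Matrix (Fin n) (Fin n) R :=
  (-1 : R) ^ ((s : ℕ) + (b : ℕ)) •
    ∑ σ ∈ Finset.univ.filter (fun σ : Equiv.Perm (Fin n) => σ s = b),
      ((Equiv.Perm.sign σ : ℤ) : R) •
        (((List.finRange n).filter (· ≠ s)).map fun r => MB A B r (σ r)).prod

/-!
Since the `B_ℓ` commute, every `M^B_{i,j}` lies in the commutative `R`-algebra `S` generated
by the `B_ℓ`, so `M^B` is a matrix `N` over a commutative ring. The two signs `(-1)^{s+b}`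
cancel and the sum becomes the expansion of `det N` along column `b`, read in `Mₙ(R)`.
Entrywise, `∑ A_ℓ B_ℓ = 0` says `∑_j E_{m,j} M^B_{i,j} = 0` for all `i, m` (with `E_{m,j}` the
matrix units), i.e. the row `(E_{m,j})_j` is killed by `Nᵀ`. Multiplying by the adjugate gives
`E_{m,j} det N = 0`, and summing `E_{m,m} det N` over `m` gives `det N = 0`.
-/

open Matrix Finset Equiv

section Laplace

variable {S ι : Type*} [CommRing S] [Fintype ι] [DecidableEq ι]

theorem Matrix.det_eq_sum_mul_sum_sign_smul_prod_erase (N : Matrix ι ι S) (b : ι) :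
    N.det = ∑ s, N s b * ∑ σ ∈ univ.filter (fun σ : Perm ι => σ s = b),
      Perm.sign σ • ∏ r ∈ univ.erase s, N r (σ r) := by
  have hfiber : ∀ s, N s b * ∑ σ ∈ univ.filter (fun σ : Perm ι => σ s = b),
      Perm.sign σ • ∏ r ∈ univ.erase s, N r (σ r) =
        ∑ σ ∈ univ.filter (fun σ : Perm ι => σ.symm b = s),
          Perm.sign σ • ∏ r, N r (σ r) := by
    intro s
    rw [mul_sum]
    refine sum_congr (filter_congr fun σ _ => σ.eq_symm_apply.symm.trans eq_comm) fun σ hσ => ?_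
    obtain rfl := (mem_filter.mp hσ).2
    rw [mul_smul_comm]
    congr 1
    simpa using mul_prod_erase univ (fun r => N r (σ r)) (mem_univ (σ.symm b))
  rw [sum_congr rfl fun s _ => hfiber s, sum_fiberwise, ← det_transpose, det_apply]
  rfl

theorem Matrix.mul_map_det_eq_zero_of_sum_mul_map_eq_zero {T : Type*} [Ring T] (φ : S →+* T)
    (N : Matrix ι ι S) (v : ι → T) (hv : ∀ i, ∑ j, v j * φ (N i j) = 0) (j : ι) :
    v j * φ N.det = 0 := by
  calc v j * φ N.det = ∑ k, v k * φ ((N.adjugate * N) j k) := by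
        simp [adjugate_mul, one_apply, apply_ite φ]
    _ = ∑ i, (∑ k, v k * φ (N i k)) * φ (N.adjugate j i) := by
        simp only [mul_apply, map_sum, mul_sum, sum_mul, mul_assoc, ← map_mul, mul_comm]
        exact sum_comm
    _ = 0 := by simp [hv]

end Laplace

theorem List.prod_map_filter_finRange_ne {M : Type*} [CommMonoid M] {n : ℕ} (f : Fin n → M)
    (s : Fin n) : (((List.finRange n).filter (· ≠ s)).map f).prod = ∏ r ∈ univ.erase s, f r := by
  rw [← List.prod_toFinset f ((List.nodup_finRange n).filter _)]
  congr
  ext r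
  simp [and_comm]

section Phillips

variable {R : Type*} [CommRing R] {n k : ℕ} (A B : Fin k → Matrix (Fin n) (Fin n) R)

theorem MB_mem_adjoin (i j : Fin n) : MB A B i j ∈ Algebra.adjoin R (Set.range B) :=
  Subalgebra.sum_mem _ fun t _ =>
    Subalgebra.smul_mem _ (Algebra.subset_adjoin (Set.mem_range_self t)) _

theorem sum_single_mul_MB_eq_zero (hAB : ∑ i, A i * B i = 0) (i m : Fin n) :
    ∑ j, single m j (1 : R) * MB A B i j = 0 := by
  ext a c
  by_cases ham : a = m
  · subst ham
    have := congrFun (congrFun hAB i) c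
    simp only [Matrix.sum_apply, mul_apply, Matrix.zero_apply] at this
    simpa [Matrix.sum_apply, MB, sum_comm (γ := Fin n)] using this
  · simp [Matrix.sum_apply, ham]

theorem detB_eq_smul_map {S : Type*} [CommRing S] [Algebra R S]
    (φ : S →ₐ[R] Matrix (Fin n) (Fin n) R) (N : Matrix (Fin n) (Fin n) S)
    (hN : ∀ i j, φ (N i j) = MB A B i j) (s b : Fin n) :
    detB A B s b = (-1 : R) ^ ((s : ℕ) + (b : ℕ)) •
      φ (∑ σ ∈ univ.filter (fun σ : Perm (Fin n) => σ s = b),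
        Perm.sign σ • ∏ r ∈ univ.erase s, N r (σ r)) := by
  rw [detB, map_sum]
  congr 1
  refine sum_congr rfl fun σ _ => ?_
  rw [Units.smul_def, map_zsmul, ← List.prod_map_filter_finRange_ne, map_list_prod, List.map_map,
    Int.cast_smul_eq_zsmul]
  simp only [Function.comp_def, hN]

theorem sum_smul_MB_mul_detB_eq_map_det {S : Type*} [CommRing S] [Algebra R S]
    (φ : S →ₐ[R] Matrix (Fin n) (Fin n) R) (N : Matrix (Fin n) (Fin n) S)
    (hN : ∀ i j, φ (N i j) = MB A B i j) (b : Fin n) :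
    ∑ s : Fin n, (-1 : R) ^ ((s : ℕ) + (b : ℕ)) • (MB A B s b * detB A B s b) = φ N.det := by
  rw [N.det_eq_sum_mul_sum_sign_smul_prod_erase b, map_sum]
  refine sum_congr rfl fun s _ => ?_
  rw [detB_eq_smul_map A B φ N hN, mul_smul_comm, smul_smul, ← pow_add, Even.neg_one_pow
    ⟨_, rfl⟩, one_smul, map_mul, hN]

end Phillips

/-- The Laplace-type identity at the heart of Phillips' original proof:
`∑_s (-1)^{s+b} M^B_{s,b} det_B M[s|b] = 0`. -/
theorem phillips_laplace {R : Type*} [CommRing R] {n k : ℕ}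
    (A B : Fin k → Matrix (Fin n) (Fin n) R)
    (hB : ∀ i j, B i * B j = B j * B i)
    (hAB : ∑ i, A i * B i = 0) (b : Fin n) :
    ∑ s : Fin n, (-1 : R) ^ ((s : ℕ) + (b : ℕ)) • (MB A B s b * detB A B s b) = 0 := by
  let S := Algebra.adjoin R (Set.range B)
  have : IsMulCommutative S := Algebra.isMulCommutative_adjoin R <| by
    rintro _ ⟨i, rfl⟩ _ ⟨j, rfl⟩
    exact hB i j
  open scoped IsMulCommutative in
  let N : Matrix (Fin n) (Fin n) S := of fun i j => ⟨MB A B i j, MB_mem_adjoin A B i j⟩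
  rw [sum_smul_MB_mul_detB_eq_map_det A B S.val N (fun _ _ => rfl)]
  have hdiag (m : Fin n) : single m m (1 : R) * S.val N.det = 0 :=
    mul_map_det_eq_zero_of_sum_mul_map_eq_zero S.val.toRingHom N _
      (fun i => sum_single_mul_MB_eq_zero A B hAB i m) m
  rw [← one_mul (S.val N.det), ← sum_single_one, sum_mul]
  exact sum_eq_zero fun m _ => hdiag m
end

section
/- Fix $n\geq 2$, $k\geq 1$ and $b,e\in[n]$. The number of pathmaps in $\mathcal{H}(b,e)$ equals $(n-1)\, n!\, k^n\, n^{n-1}$, i.e., $n-1$ times the cardinality of the set $\mathcal{A}(b,e)$ of pathmutations with endpoints $b,e$. Equivalently, the map $\phi:\mathcal{A}(b,e)\times[n]\to\mathcal{G}(b,e) = \mathcal{A}(b,e)\cup\mathcal{H}(b,e)$ defined in the paper is a bijection, and $\phi((\bar\pi,\bar q),b) = (\bar\pi,\bar q)$. -/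
/-!
The map `τ` of a pathmap in `ℋ(b,e)` takes `n` values in `[n] \ {b}`, so it has exactly one
collision pair `{i, j}`, and `σ ∈ {1, (i j)}`. Ordering the pair increasingly when `σ = 1` and
decreasingly when `σ = (i j)` turns `(τ, σ)` into `τ` with an ordered pair `(i, j)`, that is, into
the permutation `f = τ[j ↦ b]` together with the collision value `c = τ j ≠ b`. The first path
vertex is forced to be `c`, the last to be `e`, and the map labels are forced by the path labels,
so `ℋ(b,e)` is in bijection with `Sₙ × ([n] \ {b}) × [n]^(n-1) × [k]^n`.
-/

/-- A pathmap in `ℋ(b,e)`: a decorated map `(σ, τ, ℓm)` together with a decorated path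
`(q, ℓq)` such that `σ` is the identity or a single transposition, the image of `τ` is
`[n] \ {b}` (so exactly one value is repeated), for a repeated pair `i ≠ j` with
`τ i = τ j` the permutation `σ` is the identity or the swap of `i` and `j`, the path
starts at the repeated value (`q 0 = τ i`) and ends at `e`, and the labels of the map
are those of the path permuted by `σ` (so they match at all positions except possibly
at the repeated pair, where they are swapped exactly when `σ` is the swap). -/
def IsPathMapH (n k : ℕ) (b e : Fin n)
    (x : Equiv.Perm (Fin n) × (Fin n → Fin n) × (Fin n → Fin k) ×
      (Fin (n + 1) → Fin n) × (Fin n → Fin k)) : Prop :=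
  (x.1 = 1 ∨ x.1.IsSwap) ∧
  Finset.image x.2.1 Finset.univ = Finset.univ.erase b ∧
  (∀ i j, i ≠ j → x.2.1 i = x.2.1 j → (x.1 = 1 ∨ x.1 = Equiv.swap i j)) ∧
  (∀ i j, i ≠ j → x.2.1 i = x.2.1 j → x.2.2.2.1 0 = x.2.1 i) ∧
  x.2.2.2.1 (Fin.last n) = e ∧
  x.2.2.1 = x.2.2.2.2 ∘ x.1

open Finset Function Equiv

namespace PathMapH

section Collision

variable {α : Type*} [Fintype α] [DecidableEq α] {b : α} {τ : α → α}

lemma injOn_compl_of_image_eq_erase (hτ : univ.image τ = univ.erase b)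
    {i j : α} (hij : i ≠ j) (hc : τ i = τ j) : Set.InjOn τ ({j}ᶜ : Finset α) := by
  refine injOn_of_card_image_eq ?_
  have himage : ({j}ᶜ : Finset α).image τ = univ.image τ := by
    refine (image_subset_image (subset_univ _)).antisymm fun z hz => ?_
    obtain ⟨w, -, rfl⟩ := mem_image.1 hz
    rcases eq_or_ne w j with rfl | hw
    · exact mem_image.2 ⟨i, by simpa using hij, hc⟩
    · exact mem_image_of_mem τ (by simpa using hw)
  rw [himage, hτ, card_erase_of_mem (mem_univ b), card_compl, card_singleton, card_univ]

lemma collision_unique (hτ : univ.image τ = univ.erase b) {i j x y : α}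
    (hij : i ≠ j) (hc : τ i = τ j) (hxy : x ≠ y) (hcxy : τ x = τ y) :
    (x = i ∧ y = j) ∨ (x = j ∧ y = i) := by
  have hinj := injOn_compl_of_image_eq_erase hτ hij hc
  have mem : ∀ {z}, z ≠ j → z ∈ (({j}ᶜ : Finset α) : Set α) := by simp
  rcases eq_or_ne x j with rfl | hxj
  · exact Or.inr ⟨rfl, (hinj (mem hij) (mem hxy.symm) (hc.trans hcxy)).symm⟩
  rcases eq_or_ne y j with rfl | hyj
  · exact Or.inl ⟨hinj (mem hxj) (mem hij) (hcxy.trans hc.symm), rfl⟩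
  · exact absurd (hinj (mem hxj) (mem hyj) hcxy) hxy

lemma ne_of_image_eq_erase (hτ : univ.image τ = univ.erase b) (x : α) : τ x ≠ b :=
  (mem_erase.1 (hτ ▸ mem_image_of_mem τ (mem_univ x))).1

lemma bijective_update_of_image_eq_erase (hτ : univ.image τ = univ.erase b) {i j : α}
    (hij : i ≠ j) (hc : τ i = τ j) : Bijective (update τ j b) := by
  refine Finite.injective_iff_bijective.1 fun x y hxy => ?_
  have hinj := injOn_compl_of_image_eq_erase hτ hij hc
  rcases eq_or_ne x j with hx | hx <;> rcases eq_or_ne y j with hy | hy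
  · rw [hx, hy]
  · rw [hx, update_self, update_of_ne hy] at hxy
    exact absurd hxy.symm (ne_of_image_eq_erase hτ y)
  · rw [hy, update_self, update_of_ne hx] at hxy
    exact absurd hxy (ne_of_image_eq_erase hτ x)
  · rw [update_of_ne hx, update_of_ne hy] at hxy
    exact hinj (by simpa using hx) (by simpa using hy) hxy

end Collision

section Orientation

variable {α : Type*} [LinearOrder α]

def orientedSwap (i j : α) : Perm α := if i < j then 1 else swap i j

lemma orientedSwap_eq_one_or_eq_swap (i j : α) :
    orientedSwap i j = 1 ∨ orientedSwap i j = swap i j := by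
  unfold orientedSwap; split_ifs <;> simp

lemma orientedSwap_comm_ne {i j : α} (hij : i ≠ j) :
    orientedSwap j i ≠ orientedSwap i j := by
  wlog h : i < j generalizing i j
  · exact (this hij.symm (hij.lt_or_gt.resolve_left h)).symm
  simp [orientedSwap, h, h.not_gt, swap_eq_one_iff, hij.symm]

lemma eq_orientedSwap_or_eq_orientedSwap {σ : Perm α} {i j : α} (hij : i ≠ j)
    (hσ : σ = 1 ∨ σ = swap i j) : σ = orientedSwap i j ∨ σ = orientedSwap j i := by
  unfold orientedSwap
  rcases hij.lt_or_gt with h | h <;> rcases hσ with rfl | rfl <;>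
    simp [h, h.not_gt, swap_comm]

end Orientation

section Retarget

variable {α : Type*} [DecidableEq α] (f : Perm α) {b c : α}

lemma update_inv_apply_eq_of_ne (hc : c ≠ b) : update (⇑f) (f⁻¹ b) c (f⁻¹ c) = c := by
  rw [update_of_ne (by simpa using hc)]
  exact f.apply_symm_apply c

lemma image_update_eq_erase [Fintype α] (hc : c ≠ b) :
    univ.image (update (⇑f) (f⁻¹ b) c) = univ.erase b := by
  ext z
  simp only [mem_image, mem_univ, true_and, mem_erase, and_true]
  constructor
  · rintro ⟨x, rfl⟩
    rcases eq_or_ne x (f⁻¹ b) with rfl | hx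
    · simpa using hc
    · rw [update_of_ne hx]
      exact fun h => hx (by simp [← h])
  · intro hz
    exact ⟨f⁻¹ z, by rw [update_of_ne (by simpa using hz)]; exact f.apply_symm_apply z⟩

lemma update_update_inv_apply_self : update (update (⇑f) (f⁻¹ b) c) (f⁻¹ b) b = f := by
  rw [update_idem]
  simp

end Retarget

abbrev PathInterior (n : ℕ) := {t : Fin (n + 1) // t ≠ 0 ∧ t ≠ Fin.last n}

variable {n : ℕ}

lemma card_pathInterior [NeZero n] : Fintype.card (PathInterior n) = n - 1 := by
  have h : univ.filter (fun t : Fin (n + 1) => t ≠ 0 ∧ t ≠ Fin.last n) = {0, Fin.last n}ᶜ := by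
    ext; simp
  rw [Fintype.card_subtype, h, card_compl, card_pair Fin.last_pos'.ne, Fintype.card_fin]
  omega

section Path

variable {β : Type*}

def mkPath (c e : β) (mid : PathInterior n → β) (t : Fin (n + 1)) : β :=
  if h0 : t = 0 then c else if hl : t = Fin.last n then e else mid ⟨t, h0, hl⟩

variable {c e : β} {mid : PathInterior n → β}

@[simp] lemma mkPath_zero : mkPath c e mid 0 = c := dif_pos rfl

@[simp] lemma mkPath_last [NeZero n] : mkPath c e mid (Fin.last n) = e := by
  simp [mkPath, Fin.last_pos'.ne']

lemma mkPath_mid (t : PathInterior n) : mkPath c e mid t = mid t := by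
  simp [mkPath, t.2.1, t.2.2]

lemma mkPath_restrict [NeZero n] {q : Fin (n + 1) → β} (h0 : q 0 = c)
    (hl : q (Fin.last n) = e) : mkPath c e (fun t => q t) = q := by
  ext1 t
  unfold mkPath
  split_ifs with ht0 htl
  · rw [ht0, h0]
  · rw [htl, hl]
  · rfl

end Path

variable {k : ℕ} {b c e : Fin n} {mid : PathInterior n → Fin n}

/-- A variant of the paper's `φ` on `𝒜(b,e) × ([n] \ {b})`: `f`, `mid` and `ℓ` encode the
pathmutation, the edge of `f` into `b` is retargeted to `c`, and the path now starts at `c`. -/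
def toPathMap (b e : Fin n) (f : Perm (Fin n)) (c : Fin n) (mid : PathInterior n → Fin n)
    (ℓ : Fin n → Fin k) :
    Perm (Fin n) × (Fin n → Fin n) × (Fin n → Fin k) × (Fin (n + 1) → Fin n) × (Fin n → Fin k) :=
  (orientedSwap (f⁻¹ c) (f⁻¹ b), update (⇑f) (f⁻¹ b) c, ℓ ∘ orientedSwap (f⁻¹ c) (f⁻¹ b),
    mkPath c e mid, ℓ)

variable {f : Perm (Fin n)} {ℓ : Fin n → Fin k}

lemma isPathMapH_toPathMap (hc : c ≠ b) : IsPathMapH n k b e (toPathMap b e f c mid ℓ) := by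
  have : NeZero n := NeZero.of_pos b.pos
  have hij : f⁻¹ c ≠ f⁻¹ b := by simpa using hc
  have himg := image_update_eq_erase f hc
  have hτi := update_inv_apply_eq_of_ne f hc
  have hτj : update (⇑f) (f⁻¹ b) c (f⁻¹ b) = c := update_self ..
  have hcollision {x y} (hxy : x ≠ y) (hxy' : update (⇑f) (f⁻¹ b) c x = update (⇑f) (f⁻¹ b) c y) :=
    collision_unique himg hij (hτi.trans hτj.symm) hxy hxy'
  refine ⟨?_, himg, fun x y hxy hxy' => ?_, fun x y hxy hxy' => ?_, mkPath_last, rfl⟩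
  · exact (orientedSwap_eq_one_or_eq_swap _ _).imp id fun h => ⟨_, _, hij, h⟩
  · rcases hcollision hxy hxy' with ⟨rfl, rfl⟩ | ⟨rfl, rfl⟩
    · exact orientedSwap_eq_one_or_eq_swap _ _
    · rw [swap_comm]; exact orientedSwap_eq_one_or_eq_swap _ _
  · rcases hcollision hxy hxy' with ⟨rfl, -⟩ | ⟨rfl, -⟩
    · exact hτi.symm
    · exact hτj.symm

lemma eq_of_toPathMap_eq {g : Perm (Fin n)} {c' : Fin n} {mid' : PathInterior n → Fin n}
    {ℓ' : Fin n → Fin k} (hc : c ≠ b) (h : toPathMap b e f c mid ℓ = toPathMap b e g c' mid' ℓ') :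
    f = g ∧ c = c' ∧ mid = mid' ∧ ℓ = ℓ' := by
  simp only [toPathMap, Prod.mk.injEq] at h
  obtain ⟨hσ, hτ, -, hq, rfl⟩ := h
  obtain rfl : c = c' := by simpa using congrFun hq 0
  have hmid : mid = mid' := funext fun t => by simpa [mkPath_mid] using congrFun hq t
  have hpair : g⁻¹ c = f⁻¹ c ∧ g⁻¹ b = f⁻¹ b := by
    have hτfc := update_inv_apply_eq_of_ne f hc
    have hτfb : update (⇑f) (f⁻¹ b) c (f⁻¹ b) = c := update_self ..
    have hτgc : update (⇑f) (f⁻¹ b) c (g⁻¹ c) = c := hτ ▸ update_inv_apply_eq_of_ne g hc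
    have hτgb : update (⇑f) (f⁻¹ b) c (g⁻¹ b) = c := (congrFun hτ _).trans (update_self ..)
    refine (collision_unique (image_update_eq_erase f hc) (by simpa using hc)
      (hτfc.trans hτfb.symm) (by simpa using hc) (hτgc.trans hτgb.symm)).resolve_right ?_
    rintro ⟨h₁, h₂⟩
    rw [h₁, h₂] at hσ
    exact orientedSwap_comm_ne (by simpa using hc.symm) hσ
  refine ⟨DFunLike.coe_injective ?_, rfl, hmid, rfl⟩
  rw [← update_update_inv_apply_self f (b := b) (c := c),
    ← update_update_inv_apply_self g (b := b) (c := c), hτ, hpair.2]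

lemma exists_collision_eq_orientedSwap {x : Perm (Fin n) × (Fin n → Fin n) × (Fin n → Fin k) ×
      (Fin (n + 1) → Fin n) × (Fin n → Fin k)} (hx : IsPathMapH n k b e x) :
    ∃ i j, i ≠ j ∧ x.2.1 i = x.2.1 j ∧ x.1 = orientedSwap i j := by
  obtain ⟨i, -, j, -, hij, hc⟩ := exists_ne_map_eq_of_card_image_lt (s := univ) (f := x.2.1)
    (hx.2.1 ▸ card_erase_lt_of_mem (mem_univ b))
  rcases eq_orientedSwap_or_eq_orientedSwap hij (hx.2.2.1 i j hij hc) with h | h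
  · exact ⟨i, j, hij, hc, h⟩
  · exact ⟨j, i, hij.symm, hc.symm, h⟩

lemma exists_toPathMap_eq {x : Perm (Fin n) × (Fin n → Fin n) × (Fin n → Fin k) ×
      (Fin (n + 1) → Fin n) × (Fin n → Fin k)} (hx : IsPathMapH n k b e x) :
    ∃ f c mid ℓ, c ≠ b ∧ toPathMap b e f c mid ℓ = x := by
  have : NeZero n := NeZero.of_pos b.pos
  obtain ⟨i, j, hij, hc, hσ⟩ := exists_collision_eq_orientedSwap hx
  obtain ⟨σ, τ, ℓm, q, ℓq⟩ := x
  obtain ⟨-, hτ, -, hq0, hql, hℓ⟩ := hx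
  dsimp only at hτ hq0 hql hℓ hc hσ
  set f := ofBijective _ (bijective_update_of_image_eq_erase hτ hij hc)
  have hfj : f⁻¹ b = j := Perm.inv_eq_iff_eq.2 (update_self j b τ).symm
  have hfi : f⁻¹ (τ i) = i := Perm.inv_eq_iff_eq.2 (by simp [f, update_of_ne hij])
  refine ⟨f, τ i, fun t => q t, ℓq, ne_of_image_eq_erase hτ i, ?_⟩
  have hfτ : update (⇑f) j (τ i) = τ := by
    simp only [f, coe_ofBijective, update_idem, hc, update_eq_self]
  simp only [toPathMap, hfj, hfi, hfτ, ← hσ, ← hℓ, mkPath_restrict (hq0 i j hij hc) hql]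

theorem bijective_toPathMap (b e : Fin n) :
    Bijective fun y : (Perm (Fin n) × {c : Fin n // c ≠ b}) × (PathInterior n → Fin n) ×
        (Fin n → Fin k) =>
      (⟨toPathMap b e y.1.1 y.1.2 y.2.1 y.2.2, isPathMapH_toPathMap y.1.2.2⟩ :
        {x // IsPathMapH n k b e x}) := by
  refine ⟨fun ⟨⟨f, c, hc⟩, mid, ℓ⟩ ⟨⟨g, c', _⟩, mid', ℓ'⟩ h => ?_, fun ⟨x, hx⟩ => ?_⟩
  · obtain ⟨rfl, rfl, rfl, rfl⟩ := eq_of_toPathMap_eq hc (congrArg Subtype.val h)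
    rfl
  · obtain ⟨f, c, mid, ℓ, hc, rfl⟩ := exists_toPathMap_eq hx
    exact ⟨⟨⟨f, c, hc⟩, mid, ℓ⟩, rfl⟩

end PathMapH

theorem card_pathmaps_H_general (n k : ℕ) (b e : Fin n) :
    Nat.card {x // IsPathMapH n k b e x} =
      (n - 1) * n.factorial * k ^ n * n ^ (n - 1) := by
  have : NeZero n := NeZero.of_pos b.pos
  rw [← Nat.card_eq_of_bijective _ (PathMapH.bijective_toPathMap b e), Nat.card_eq_fintype_card]
  simp only [Fintype.card_prod, Fintype.card_fun, Fintype.card_perm, PathMapH.card_pathInterior,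
    Fintype.card_subtype_compl, Fintype.card_unique, Fintype.card_fin]
  ring

/-- The number of pathmaps in `ℋ(b,e)` is `(n-1) n! kⁿ n^{n-1}`, i.e. `n - 1` times the
number of pathmutations in `𝒜(b,e)`. -/
theorem card_pathmaps_H (n k : ℕ) (hn : 2 ≤ n) (hk : 1 ≤ k) (b e : Fin n) :
    Nat.card {x // IsPathMapH n k b e x} =
      (n - 1) * n.factorial * k ^ n * n ^ (n - 1) :=
  card_pathmaps_H_general n k b e
end
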